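/- For every permutation π of [q·2^r] there is a setting of the switches and q-permuters of a (q,r)-Benes network realising π: every permutation of [p] with p = q·2^r factors as τ_in ∘ (σ_0 ⊕ σ_1) ∘ τ_out where τ_in, τ_out come from p/2 independent switches pairing i with i + p/2, and σ_0, σ_1 are arbitrary permutations of [p/2]. -/

import Mathlib

/-!
Identify `Fin (2 * N)` with `Bool × Fin N`, a switch acting on the `Bool` coordinate. Let `a`
swap the two inputs of every switch and let `b = π⁻¹ a π` swap the two inputs that `π` sends to
the two outputs of a switch. Every element `a (a b) ^ m` of the dihedral group generated by these
fixed-point-free involutions is conjugate to `a` or to `b`, so `a x` never lies in the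
`⟨a b⟩`-orbit of `x`: `a` pairs off the orbits of `a b`, and picking one orbit of each pair yields
a colouring `c : Bool × Fin N → Bool` with `c (a x) ≠ c x` and `c (b x) ≠ c x`. Setting the
outer switches so that `x` leaves the input layer in half `c x` and `π x` enters the output layer
from half `c x`, the remaining middle permutation preserves halves, so it is `σ₀ ⊕ σ₁`.
-/

/-- The outer layer of switches: input `x` is paired with `x + N` (resp. `x - N`),
and the switch `s` either fixes or swaps each pair. -/
def switchLayer (N : ℕ) (s : Fin N → Bool) : Fin (2 * N) → Fin (2 * N) := fun x =>
  if h : x.val < N then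
    if s ⟨x.val, h⟩ then ⟨x.val + N, by omega⟩ else x
  else
    if s ⟨x.val - N, by have := x.isLt; omega⟩ then
      ⟨x.val - N, by have := x.isLt; omega⟩ else x

/-- The middle layer `σ₀ ⊕ σ₁`: `σ₀` permutes the first half and `σ₁` the second half. -/
def middleLayer (N : ℕ) (σ₀ σ₁ : Equiv.Perm (Fin N)) : Fin (2 * N) → Fin (2 * N) := fun x =>
  if h : x.val < N then ⟨(σ₀ ⟨x.val, h⟩).val, by have := (σ₀ ⟨x.val, h⟩).isLt; omega⟩
  else ⟨(σ₁ ⟨x.val - N, by have := x.isLt; omega⟩).val + N,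
    by have := (σ₁ ⟨x.val - N, by have := x.isLt; omega⟩).isLt; omega⟩

open Equiv

section Reflections

variable {G : Type*} [Group G] {a b : G}

theorem mul_zpow_mul_eq_inv_mul (ha : a * a = 1) (hb : b * b = 1) (k : ℤ) :
    a * (a * b) ^ k = ((a * b) ^ k)⁻¹ * a := by
  have h : SemiconjBy a (a * b) (a * b)⁻¹ := by
    rw [SemiconjBy, ← mul_assoc, ha, one_mul, mul_inv_rev, inv_mul_cancel_right,
      inv_eq_of_mul_eq_one_right hb]
  rw [← inv_zpow]
  exact h.zpow_right k

theorem mul_zpow_two_mul_eq_conj (ha : a * a = 1) (hb : b * b = 1) (n : ℤ) :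
    a * (a * b) ^ (2 * n) = ((a * b) ^ n)⁻¹ * a * (a * b) ^ n := by
  rw [two_mul, zpow_add, ← mul_assoc, mul_zpow_mul_eq_inv_mul ha hb]

theorem mul_zpow_two_mul_add_one_eq_conj (ha : a * a = 1) (hb : b * b = 1) (n : ℤ) :
    a * (a * b) ^ (2 * n + 1) = ((a * b) ^ n)⁻¹ * b * (a * b) ^ n := by
  rw [show 2 * n + 1 = n + 1 + n by ring, zpow_add, zpow_add, zpow_one, ← mul_assoc,
    ← mul_assoc, mul_zpow_mul_eq_inv_mul ha hb, mul_assoc _ a, ← mul_assoc a, ha, one_mul]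

end Reflections

section Coloring

variable {S : Type*} {a b : Equiv.Perm S}

theorem not_sameCycle_apply_self (ha : a * a = 1) (hb : b * b = 1) (ha' : ∀ x, a x ≠ x)
    (hb' : ∀ x, b x ≠ x) (x : S) : ¬ (a * b).SameCycle x (a x) := by
  rintro ⟨m, hm⟩
  have hfix : (a * (a * b) ^ m) x = x := by
    rw [Perm.mul_apply, hm, ← Perm.mul_apply, ha, Perm.one_apply]
  obtain ⟨n, rfl | rfl⟩ := Int.even_or_odd' m
  · rw [mul_zpow_two_mul_eq_conj ha hb] at hfix
    exact ha' _ (Perm.inv_eq_iff_eq.mp hfix)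
  · rw [mul_zpow_two_mul_add_one_eq_conj ha hb] at hfix
    exact hb' _ (Perm.inv_eq_iff_eq.mp hfix)

theorem exists_coloring_of_involutions (ha : a * a = 1) (hb : b * b = 1) (ha' : ∀ x, a x ≠ x)
    (hb' : ∀ x, b x ≠ x) : ∃ c : S → Bool, (∀ x, c (a x) = !c x) ∧ ∀ x, c (b x) = !c x := by
  let o : S → Quotient (Perm.SameCycle.setoid (a * b)) := Quotient.mk _
  -- any order will do: it only serves to pick one orbit from each pair `{O, a O}`
  let _ : LinearOrder (Quotient (Perm.SameCycle.setoid (a * b))) :=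
    IsWellOrder.linearOrder WellOrderingRel
  have ho_mul : ∀ x, o ((a * b) x) = o x := fun x =>
    Quotient.sound (Perm.sameCycle_apply_left.2 (Perm.SameCycle.refl _ x))
  have ho_a : ∀ x y, o x = o y → o (a x) = o (a y) := by
    intro x y h
    obtain ⟨k, rfl⟩ := Quotient.exact h
    refine Quotient.sound ⟨-k, ?_⟩
    rw [zpow_neg, ← Perm.mul_apply, ← Perm.mul_apply, mul_zpow_mul_eq_inv_mul ha hb]
  have ho_ne : ∀ x, o x ≠ o (a x) := fun x h =>
    not_sameCycle_apply_self ha hb ha' hb' x (Quotient.exact h)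
  have hflip : ∀ x y, o y = o (a x) → o (a y) = o x →
      decide (o y < o (a y)) = !decide (o x < o (a x)) := by
    intro x y h₁ h₂
    rw [h₁, h₂]
    rcases (ho_ne x).lt_or_gt with h | h <;> simp [h, h.not_gt]
  refine ⟨fun x => decide (o x < o (a x)), fun x => hflip x (a x) rfl ?_,
    fun x => hflip x (b x) ?_ (ho_mul x)⟩
  · rw [← Perm.mul_apply, ha, Perm.one_apply]
  · rw [← ho_a _ _ (ho_mul x), ← Perm.mul_apply, ← mul_assoc, ha, one_mul]

end Coloring

section Switches

variable {ι : Type*}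

def pairSwitch (s : ι → Bool) : Perm (Bool × ι) :=
  Function.Involutive.toPerm (fun x => (xor x.1 (s x.2), x.2)) fun x => by simp

@[simp]
theorem pairSwitch_apply (s : ι → Bool) (x : Bool × ι) :
    pairSwitch s x = (xor x.1 (s x.2), x.2) := rfl

theorem pairSwitch_mul_self (s : ι → Bool) : pairSwitch s * pairSwitch s = 1 := by
  ext x <;> simp

theorem pairSwitch_eq_of_coloring {c : Bool × ι → Bool} (hc : ∀ j, c (true, j) = !c (false, j))
    (x : Bool × ι) : pairSwitch (fun j => c (false, j)) x = (c x, x.2) := by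
  obtain ⟨_ | _, j⟩ := x <;> simp [hc]

theorem Equiv.Perm.exists_eq_prodShear_of_fst_apply {α : Type*} (ρ : Perm (α × ι))
    (hρ : ∀ x, (ρ x).1 = x.1) : ∃ σ : α → Perm ι, ρ = prodShear (Equiv.refl α) σ := by
  have hρ_symm : ∀ x, (ρ.symm x).1 = x.1 := fun x => by
    simpa using (hρ (ρ.symm x)).symm
  have hρ_mk : ∀ a j, ρ (a, j) = (a, (ρ (a, j)).2) := fun a j => Prod.ext (hρ _) rfl
  have hρ_symm_mk : ∀ a j, ρ.symm (a, j) = (a, (ρ.symm (a, j)).2) := fun a j =>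
    Prod.ext (hρ_symm _) rfl
  refine ⟨fun a => ⟨fun j => (ρ (a, j)).2, fun j => (ρ.symm (a, j)).2, fun j => ?_, fun j => ?_⟩,
    ?_⟩
  · simp [← hρ_mk]
  · simp [← hρ_symm_mk]
  · ext x <;> simp [hρ]

theorem exists_pairSwitch_mul_prodShear_mul_pairSwitch (π : Perm (Bool × ι)) :
    ∃ (sIn sOut : ι → Bool) (σ : Bool → Perm ι),
      π = pairSwitch sIn * prodShear (Equiv.refl Bool) σ * pairSwitch sOut := by
  let a : Perm (Bool × ι) := pairSwitch fun _ => true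
  have ha : a * a = 1 := pairSwitch_mul_self _
  have ha' : ∀ x, a x ≠ x := by simp [a, Prod.ext_iff]
  have hb : π⁻¹ * a * π * (π⁻¹ * a * π) = 1 := by
    rw [show π⁻¹ * a * π * (π⁻¹ * a * π) = π⁻¹ * (a * a) * π by group, ha]
    group
  have hb' : ∀ x, (π⁻¹ * a * π) x ≠ x := fun x h => ha' (π x) (Perm.inv_eq_iff_eq.1 h)
  obtain ⟨c, hca, hcb⟩ := exists_coloring_of_involutions ha hb ha' hb'
  let sOut : ι → Bool := fun j => c (false, j)
  let sIn : ι → Bool := fun k => c (π⁻¹ (false, k))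
  have hOut : ∀ x, pairSwitch sOut x = (c x, x.2) :=
    pairSwitch_eq_of_coloring fun j => hca (false, j)
  have hIn : ∀ y, pairSwitch sIn y = (c (π⁻¹ y), y.2) :=
    pairSwitch_eq_of_coloring (c := fun y => c (π⁻¹ y)) fun k => by
      simpa [a, Perm.mul_apply] using hcb (π⁻¹ (false, k))
  obtain ⟨σ, hσ⟩ := (pairSwitch sIn * π * pairSwitch sOut).exists_eq_prodShear_of_fst_apply
    fun x => by
      have hx := congrArg Prod.fst (hOut (pairSwitch sOut x))
      rw [← Perm.mul_apply, pairSwitch_mul_self, Perm.one_apply] at hx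
      simp only [Perm.mul_apply, hIn, Perm.coe_inv, symm_apply_apply, hx]
  refine ⟨sIn, sOut, σ, ?_⟩
  rw [← hσ, ← mul_assoc, ← mul_assoc, pairSwitch_mul_self, one_mul, mul_assoc,
    pairSwitch_mul_self, mul_one]

end Switches

def boolProdFinEquiv (N : ℕ) : Bool × Fin N ≃ Fin (2 * N) :=
  (boolProdEquivSum (Fin N)).trans (finSumFinEquiv.trans (finCongr (two_mul N).symm))

theorem boolProdFinEquiv_apply_val (N : ℕ) (b : Bool) (j : Fin N) :
    (boolProdFinEquiv N (b, j)).val = cond b (j + N) j := by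
  cases b <;> simp [boolProdFinEquiv, add_comm]

theorem switchLayer_boolProdFinEquiv (N : ℕ) (s : Fin N → Bool) (x : Bool × Fin N) :
    switchLayer N s (boolProdFinEquiv N x) = boolProdFinEquiv N (pairSwitch s x) := by
  obtain ⟨b, j⟩ := x
  have hj := j.isLt
  cases b <;> cases hs : s j <;>
    simp [switchLayer, Fin.ext_iff, boolProdFinEquiv_apply_val, hs]

theorem middleLayer_boolProdFinEquiv (N : ℕ) (σ : Bool → Perm (Fin N)) (x : Bool × Fin N) :
    middleLayer N (σ false) (σ true) (boolProdFinEquiv N x) =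
      boolProdFinEquiv N (prodShear (Equiv.refl Bool) σ x) := by
  obtain ⟨b, j⟩ := x
  have hj := j.isLt
  cases b <;> simp [middleLayer, Fin.ext_iff, boolProdFinEquiv_apply_val]

theorem q_benes_rearrangeable_general (N : ℕ) (π : Equiv.Perm (Fin (2 * N))) :
    ∃ (sIn sOut : Fin N → Bool) (σ₀ σ₁ : Equiv.Perm (Fin N)),
      ∀ x : Fin (2 * N),
        π x = switchLayer N sIn (middleLayer N σ₀ σ₁ (switchLayer N sOut x)) := by
  obtain ⟨sIn, sOut, σ, hπ⟩ :=
    exists_pairSwitch_mul_prodShear_mul_pairSwitch ((boolProdFinEquiv N).symm.permCongr π)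
  refine ⟨sIn, sOut, σ false, σ true, fun x => ?_⟩
  obtain ⟨y, rfl⟩ := (boolProdFinEquiv N).surjective x
  rw [switchLayer_boolProdFinEquiv, middleLayer_boolProdFinEquiv, switchLayer_boolProdFinEquiv,
    ← Perm.mul_apply, ← Perm.mul_apply, ← hπ]
  simp [permCongr_apply]

/-- Rearrangeability of the `(q,r)`-Benes network (induction step): for `q > 1`,
`r ≥ 1` and `p = q * 2^r`, every permutation of `[p]` factors as
`τ_in ∘ (σ₀ ⊕ σ₁) ∘ τ_out` where `τ_in, τ_out` come from `p/2` independent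
switches pairing `i` with `i + p/2`, and `σ₀, σ₁` are arbitrary permutations
of `[p/2]`. -/
theorem q_benes_rearrangeable (q r : ℕ) (hq : 1 < q) (hr : 1 ≤ r) (N : ℕ)
    (hN : 2 * N = q * 2 ^ r) (π : Equiv.Perm (Fin (2 * N))) :
    ∃ (sIn sOut : Fin N → Bool) (σ₀ σ₁ : Equiv.Perm (Fin N)),
      ∀ x : Fin (2 * N),
        π x = switchLayer N sIn (middleLayer N σ₀ σ₁ (switchLayer N sOut x)) :=
  q_benes_rearrangeable_general N π
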